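/- The number of non-crossing set partitions of {1,...,n} (which is the n-th Catalan number) equals the sum, over all Motzkin paths m of length n, of 2^{h(m)}, where h(m) is the number of horizontal steps of m taken at strictly positive height. -/

import Mathlib

/-- In a set partition (equivalence relation) `s` of `Fin n`, `i` precedes `j` if
they lie in the same block and `j` is the next-larger element after `i` in that block. -/
def precedes {n : ℕ} (s : Setoid (Fin n)) (i j : Fin n) : Prop :=
  i < j ∧ s.r i j ∧ ∀ k, i < k → k < j → ¬ s.r i k

/-- A set partition is non-crossing: there are no `a < c < b < d` with `a` preceding
`b` and `c` preceding `d`. -/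
def NonCrossing {n : ℕ} (s : Setoid (Fin n)) : Prop :=
  ¬ ∃ a b c d : Fin n, precedes s a b ∧ precedes s c d ∧ a < c ∧ c < b ∧ b < d

/-- A Motzkin path of length `n`, encoded by its step sequence `s : ℕ → ℤ`
(steps `+1, 0, -1` on indices `< n`, `0` afterwards), staying weakly above the
axis and ending at height `0`. -/
def IsMotzkin (n : ℕ) (s : ℕ → ℤ) : Prop :=
  (∀ i < n, s i = 1 ∨ s i = 0 ∨ s i = -1) ∧ (∀ i, n ≤ i → s i = 0) ∧
  (∀ i ≤ n, 0 ≤ ∑ j ∈ Finset.range i, s j) ∧ (∑ j ∈ Finset.range n, s j = 0)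

open Finset

attribute [local instance] Classical.propDecidable

/-- Arc diagrams: sets of arcs `(a,b)`, `a<b<n`, out-degree ≤ 1, in-degree ≤ 1,
noncrossing. -/
def ArcOK (n : ℕ) (A : Finset (ℕ × ℕ)) : Prop :=
  (∀ p ∈ A, p.1 < p.2 ∧ p.2 < n) ∧
  (∀ p ∈ A, ∀ q ∈ A, p.1 = q.1 → p = q) ∧
  (∀ p ∈ A, ∀ q ∈ A, p.2 = q.2 → p = q) ∧
  (∀ p ∈ A, ∀ q ∈ A, p.1 < q.1 → q.1 < p.2 → p.2 < q.2 → False)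

noncomputable def arcN (n : ℕ) : Finset (Finset (ℕ × ℕ)) :=
  (Finset.range n ×ˢ Finset.range n).powerset.filter (ArcOK n)

lemma mem_arcN {n : ℕ} {A : Finset (ℕ × ℕ)} : A ∈ arcN n ↔ ArcOK n A := by
  simp only [arcN, mem_filter, mem_powerset, and_iff_right_iff_imp]
  intro h p hp
  have := h.1 p hp
  simp only [mem_product, mem_range]
  exact ⟨lt_trans this.1 this.2, this.2⟩

lemma arcN_zero : arcN 0 = {∅} := by
  ext A
  simp only [mem_arcN, mem_singleton]
  constructor
  · intro h
    ext p
    simp only [Finset.notMem_empty, iff_false]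
    intro hp
    exact Nat.not_lt_zero _ (h.1 p hp).2
  · rintro rfl
    refine ⟨by simp, by simp, by simp, by simp⟩

lemma arcN_zero_card : (arcN 0).card = 1 := by rw [arcN_zero]; simp

/-- shifting an arc set up by `k`. -/
def shiftA (k : ℕ) (A : Finset (ℕ × ℕ)) : Finset (ℕ × ℕ) :=
  A.image fun p => (p.1 + k, p.2 + k)

lemma shiftA_inj (k : ℕ) : Function.Injective fun p : ℕ × ℕ => (p.1 + k, p.2 + k) := by
  rintro ⟨a, b⟩ ⟨c, d⟩ h
  simp only [Prod.mk.injEq] at h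
  simp [Prod.ext_iff, Nat.add_right_cancel h.1, Nat.add_right_cancel h.2]

lemma mem_shiftA {k : ℕ} {A : Finset (ℕ × ℕ)} {p : ℕ × ℕ} :
    p ∈ shiftA k A ↔ ∃ q ∈ A, p = (q.1 + k, q.2 + k) := by
  simp [shiftA, eq_comm]

lemma shiftA_injective (k : ℕ) : Function.Injective (shiftA k) := by
  intro A B h
  ext p
  constructor
  · intro hp
    have : (p.1 + k, p.2 + k) ∈ shiftA k B := by
      rw [← h]; exact mem_shiftA.2 ⟨p, hp, rfl⟩
    rcases mem_shiftA.1 this with ⟨q, hq, hqe⟩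
    have : p = q := shiftA_inj k (by simpa [Prod.ext_iff] using hqe)
    rwa [this]
  · intro hp
    have : (p.1 + k, p.2 + k) ∈ shiftA k A := by
      rw [h]; exact mem_shiftA.2 ⟨p, hp, rfl⟩
    rcases mem_shiftA.1 this with ⟨q, hq, hqe⟩
    have : p = q := shiftA_inj k (by simpa [Prod.ext_iff] using hqe)
    rwa [this]

lemma arcOK_shift {n k : ℕ} {A : Finset (ℕ × ℕ)} :
    ArcOK (n + k) (shiftA k A) ↔ ArcOK n A := by
  constructor
  · rintro ⟨h1, h2, h3, h4⟩
    refine ⟨?_, ?_, ?_, ?_⟩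
    · intro p hp
      have := h1 _ (mem_shiftA.2 ⟨p, hp, rfl⟩)
      simp only at this
      omega
    · intro p hp q hq he
      exact shiftA_inj k <| h2 _ (mem_shiftA.2 ⟨p, hp, rfl⟩) _ (mem_shiftA.2 ⟨q, hq, rfl⟩)
        (by simpa using he)
    · intro p hp q hq he
      exact shiftA_inj k <| h3 _ (mem_shiftA.2 ⟨p, hp, rfl⟩) _ (mem_shiftA.2 ⟨q, hq, rfl⟩)
        (by simpa using he)
    · intro p hp q hq ha hb hc
      exact h4 _ (mem_shiftA.2 ⟨p, hp, rfl⟩) _ (mem_shiftA.2 ⟨q, hq, rfl⟩)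
        (by simpa using ha) (by simpa using hb) (by simpa using hc)
  · rintro ⟨h1, h2, h3, h4⟩
    refine ⟨?_, ?_, ?_, ?_⟩
    · rintro p hp
      rcases mem_shiftA.1 hp with ⟨q, hq, rfl⟩
      have := h1 q hq
      simp only
      omega
    · rintro p hp q hq he
      rcases mem_shiftA.1 hp with ⟨p', hp', rfl⟩
      rcases mem_shiftA.1 hq with ⟨q', hq', rfl⟩
      simp only at he ⊢
      have : p' = q' := h2 _ hp' _ hq' (by omega)
      rw [this]
    · rintro p hp q hq he
      rcases mem_shiftA.1 hp with ⟨p', hp', rfl⟩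
      rcases mem_shiftA.1 hq with ⟨q', hq', rfl⟩
      simp only at he ⊢
      have : p' = q' := h3 _ hp' _ hq' (by omega)
      rw [this]
    · rintro p hp q hq ha hb hc
      rcases mem_shiftA.1 hp with ⟨p', hp', rfl⟩
      rcases mem_shiftA.1 hq with ⟨q', hq', rfl⟩
      simp only at ha hb hc
      exact h4 _ hp' _ hq' (by omega) (by omega) (by omega)

lemma arcOK_mono {n m : ℕ} {A B : Finset (ℕ × ℕ)} (hA : ArcOK n A) (hBA : B ⊆ A)
    (hb : ∀ p ∈ B, p.2 < m) : ArcOK m B :=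
  ⟨fun p hp => ⟨(hA.1 p (hBA hp)).1, hb p hp⟩,
   fun p hp q hq => hA.2.1 p (hBA hp) q (hBA hq),
   fun p hp q hq => hA.2.2.1 p (hBA hp) q (hBA hq),
   fun p hp q hq => hA.2.2.2 p (hBA hp) q (hBA hq)⟩

lemma exists_shift_preimage {k : ℕ} {A : Finset (ℕ × ℕ)} (h : ∀ p ∈ A, k ≤ p.1)
    (h2 : ∀ p ∈ A, p.1 < p.2) : ∃ B, A = shiftA k B := by
  refine ⟨A.image fun p => (p.1 - k, p.2 - k), ?_⟩
  ext p
  simp only [mem_shiftA, Finset.mem_image]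
  constructor
  · intro hp
    refine ⟨(p.1 - k, p.2 - k), ⟨p, hp, rfl⟩, ?_⟩
    have := h p hp
    have := h2 p hp
    obtain ⟨p1, p2⟩ := p
    have h3 := h _ hp
    have h4 := h2 _ hp
    simp only at h3 h4 ⊢
    simp only [Prod.mk.injEq]
    omega
  · rintro ⟨q, ⟨r, hr, rfl⟩, rfl⟩
    have := h r hr
    have := h2 r hr
    simp only
    have e1 : r.1 - k + k = r.1 := by omega
    have e2 : r.2 - k + k = r.2 := by omega
    rw [e1, e2]
    exact hr

noncomputable def part0 (n : ℕ) : Finset (Finset (ℕ × ℕ)) :=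
  (arcN (n + 1)).filter fun A => ∀ b, (0, b) ∉ A

noncomputable def partj (n j : ℕ) : Finset (Finset (ℕ × ℕ)) :=
  (arcN (n + 1)).filter fun A => (0, j) ∈ A

lemma part0_card (n : ℕ) : (part0 n).card = (arcN n).card := by
  symm
  apply Finset.card_bij (fun B _ => shiftA 1 B)
  · intro B hB
    rw [part0, mem_filter]
    constructor
    · exact mem_arcN.2 (arcOK_shift.2 (mem_arcN.1 hB))
    · intro b hb
      rcases mem_shiftA.1 hb with ⟨q, _, hq⟩
      simp only [Prod.mk.injEq] at hq
      omega
  · intro B _ B' _ h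
    exact shiftA_injective 1 h
  · intro A hA
    rw [part0, mem_filter] at hA
    have hOK := mem_arcN.1 hA.1
    have h1 : ∀ p ∈ A, 1 ≤ p.1 := by
      intro p hp
      by_contra h
      have hp1 : p.1 = 0 := by omega
      have : p = (0, p.2) := by rw [← hp1]
      exact hA.2 p.2 (this ▸ hp)
    obtain ⟨B, hBe⟩ := exists_shift_preimage h1 (fun p hp => (hOK.1 p hp).1)
    refine ⟨B, ?_, hBe.symm⟩
    rw [mem_arcN, ← arcOK_shift (k := 1), ← hBe]
    exact hOK

noncomputable def recomb (j : ℕ) (B C : Finset (ℕ × ℕ)) : Finset (ℕ × ℕ) :=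
  insert (0, j) (shiftA 1 B ∪ shiftA j C)

lemma mem_recomb {j : ℕ} {B C : Finset (ℕ × ℕ)} {p : ℕ × ℕ} :
    p ∈ recomb j B C ↔ p = (0, j) ∨ p ∈ shiftA 1 B ∨ p ∈ shiftA j C := by
  simp [recomb]

lemma shift_facts1 {j n : ℕ} {B : Finset (ℕ × ℕ)} (hB : ArcOK (j - 1) B) (hj : 1 ≤ j)
    (hjn : j ≤ n) {p : ℕ × ℕ} (hp : p ∈ shiftA 1 B) : 1 ≤ p.1 ∧ p.1 < p.2 ∧ p.2 < j := by
  rcases mem_shiftA.1 hp with ⟨q, hq, rfl⟩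
  have := hB.1 q hq
  simp only
  omega

lemma shift_facts2 {j n : ℕ} {C : Finset (ℕ × ℕ)} (hC : ArcOK (n + 1 - j) C) (hj : 1 ≤ j)
    (hjn : j ≤ n) {p : ℕ × ℕ} (hp : p ∈ shiftA j C) : j ≤ p.1 ∧ p.1 < p.2 ∧ p.2 < n + 1 := by
  rcases mem_shiftA.1 hp with ⟨q, hq, rfl⟩
  have := hC.1 q hq
  simp only
  omega

lemma recomb_arcOK {n j : ℕ} {B C : Finset (ℕ × ℕ)} (hB : ArcOK (j - 1) B)
    (hC : ArcOK (n + 1 - j) C) (hj : 1 ≤ j) (hjn : j ≤ n) :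
    ArcOK (n + 1) (recomb j B C) := by
  have f1 := fun {p} hp => shift_facts1 (n := n) hB hj hjn (p := p) hp
  have f2 := fun {p} hp => shift_facts2 hC hj hjn (p := p) hp
  refine ⟨?_, ?_, ?_, ?_⟩
  · intro p hp
    rcases mem_recomb.1 hp with rfl | h | h
    · simp; omega
    · have := f1 h; omega
    · have := f2 h; omega
  · intro p hp q hq he
    rcases mem_recomb.1 hp with rfl | h | h <;> rcases mem_recomb.1 hq with rfl | h' | h'
    · rfl
    · have := f1 h'; simp only at he; omega
    · have := f2 h'; simp only at he; omega
    · have := f1 h; simp only at he; omega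
    · rcases mem_shiftA.1 h with ⟨a, ha, rfl⟩
      rcases mem_shiftA.1 h' with ⟨b, hb, rfl⟩
      simp only at he
      have : a = b := hB.2.1 a ha b hb (by omega)
      rw [this]
    · have g1 := f1 h; have g2 := f2 h'; omega
    · have := f2 h; simp only at he; omega
    · have g1 := f1 h'; have g2 := f2 h; omega
    · rcases mem_shiftA.1 h with ⟨a, ha, rfl⟩
      rcases mem_shiftA.1 h' with ⟨b, hb, rfl⟩
      simp only at he
      have : a = b := hC.2.1 a ha b hb (by omega)
      rw [this]
  · intro p hp q hq he
    rcases mem_recomb.1 hp with rfl | h | h <;> rcases mem_recomb.1 hq with rfl | h' | h'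
    · rfl
    · have := f1 h'; simp only at he; omega
    · rcases mem_shiftA.1 h' with ⟨b, hb, rfl⟩
      simp only at he
      have := hC.1 b hb
      omega
    · have := f1 h; simp only at he; omega
    · rcases mem_shiftA.1 h with ⟨a, ha, rfl⟩
      rcases mem_shiftA.1 h' with ⟨b, hb, rfl⟩
      simp only at he
      have : a = b := hB.2.2.1 a ha b hb (by omega)
      rw [this]
    · have g1 := f1 h; have g2 := f2 h'; omega
    · rcases mem_shiftA.1 h with ⟨a, ha, rfl⟩
      simp only at he
      have := hC.1 a ha
      omega
    · have g1 := f1 h'; have g2 := f2 h; omega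
    · rcases mem_shiftA.1 h with ⟨a, ha, rfl⟩
      rcases mem_shiftA.1 h' with ⟨b, hb, rfl⟩
      simp only at he
      have : a = b := hC.2.2.1 a ha b hb (by omega)
      rw [this]
  · intro p hp q hq ha hb hc
    rcases mem_recomb.1 hp with rfl | h | h <;> rcases mem_recomb.1 hq with rfl | h' | h'
    · simp at ha
    · have := f1 h'; simp only at ha hb hc; omega
    · have := f2 h'; simp only at ha hb hc; omega
    · have := f1 h; simp only at ha hb hc; omega
    · rcases mem_shiftA.1 h with ⟨a', ha', rfl⟩
      rcases mem_shiftA.1 h' with ⟨b', hb', rfl⟩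
      simp only at ha hb hc
      exact hB.2.2.2 a' ha' b' hb' (by omega) (by omega) (by omega)
    · have g1 := f1 h; have g2 := f2 h'; omega
    · have := f2 h; simp only at ha hb hc; omega
    · have g1 := f2 h; have g2 := f1 h'; omega
    · rcases mem_shiftA.1 h with ⟨a', ha', rfl⟩
      rcases mem_shiftA.1 h' with ⟨b', hb', rfl⟩
      simp only at ha hb hc
      exact hC.2.2.2 a' ha' b' hb' (by omega) (by omega) (by omega)

lemma partj_card {n j : ℕ} (hj : 1 ≤ j) (hjn : j ≤ n) :
    (partj n j).card = (arcN (j - 1)).card * (arcN (n + 1 - j)).card := by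
  rw [← Finset.card_product]
  symm
  apply Finset.card_bij (fun BC _ => recomb j BC.1 BC.2)
  · rintro ⟨B, C⟩ hBC
    rw [Finset.mem_product] at hBC
    have hB := mem_arcN.1 hBC.1
    have hC := mem_arcN.1 hBC.2
    rw [partj, mem_filter]
    exact ⟨mem_arcN.2 (recomb_arcOK hB hC hj hjn), mem_recomb.2 (Or.inl rfl)⟩
  · rintro ⟨B, C⟩ hBC ⟨B', C'⟩ hBC' h
    rw [Finset.mem_product] at hBC hBC'
    have hB := mem_arcN.1 hBC.1
    have hC := mem_arcN.1 hBC.2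
    have hB' := mem_arcN.1 hBC'.1
    have hC' := mem_arcN.1 hBC'.2
    have key1 : ∀ (B C : Finset (ℕ × ℕ)), ArcOK (j - 1) B → ArcOK (n + 1 - j) C →
        (recomb j B C).filter (fun p => p.2 < j) = shiftA 1 B := by
      intro B C hB hC
      ext p
      rw [mem_filter, mem_recomb]
      constructor
      · rintro ⟨rfl | h | h, h2⟩
        · simp at h2
        · exact h
        · have := shift_facts2 hC hj hjn h; omega
      · intro h
        have := shift_facts1 (n := n) hB hj hjn h
        exact ⟨Or.inr (Or.inl h), this.2.2⟩
    have key2 : ∀ (B C : Finset (ℕ × ℕ)), ArcOK (j - 1) B → ArcOK (n + 1 - j) C →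
        (recomb j B C).filter (fun p => j ≤ p.1) = shiftA j C := by
      intro B C hB hC
      ext p
      rw [mem_filter, mem_recomb]
      constructor
      · rintro ⟨rfl | h | h, h2⟩
        · simp at h2; omega
        · have := shift_facts1 (n := n) hB hj hjn h; omega
        · exact h
      · intro h
        have := shift_facts2 hC hj hjn h
        exact ⟨Or.inr (Or.inr h), this.1⟩
    have e1 : shiftA 1 B = shiftA 1 B' := by
      rw [← key1 B C hB hC, ← key1 B' C' hB' hC', h]
    have e2 : shiftA j C = shiftA j C' := by
      rw [← key2 B C hB hC, ← key2 B' C' hB' hC', h]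
    have : B = B' := shiftA_injective 1 e1
    have : C = C' := shiftA_injective j e2
    simp_all
  · intro A hA
    rw [partj, mem_filter] at hA
    have hOK := mem_arcN.1 hA.1
    have h0j := hA.2
    have tri : ∀ p ∈ A, p = (0, j) ∨ (1 ≤ p.1 ∧ p.1 < p.2 ∧ p.2 < j) ∨ j ≤ p.1 := by
      intro p hp
      by_cases hpe : p = (0, j)
      · exact Or.inl hpe
      · right
        have hb := hOK.1 p hp
        have hp1 : 1 ≤ p.1 := by
          by_contra hcon
          have h10 : p.1 = 0 := by omega
          exact hpe (hOK.2.1 p hp (0, j) h0j (by simp [h10]))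
        by_cases hj2 : j ≤ p.1
        · exact Or.inr hj2
        · left
          refine ⟨hp1, hb.1, ?_⟩
          rcases lt_trichotomy p.2 j with h | h | h
          · exact h
          · exact absurd (hOK.2.2.1 p hp (0, j) h0j (by simp [h])) hpe
          · exact absurd (hOK.2.2.2 (0, j) h0j p hp (by show 0 < p.1; omega) (by simpa using not_le.1 hj2) (by simpa using h)) not_false
    set A1 := A.filter (fun p => p.2 < j) with hA1def
    set A2 := A.filter (fun p => j ≤ p.1) with hA2def
    have hA1low : ∀ p ∈ A1, 1 ≤ p.1 := by
      intro p hp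
      rw [hA1def, mem_filter] at hp
      rcases tri p hp.1 with rfl | h | h
      · simp at hp
      · exact h.1
      · have := hOK.1 p hp.1; omega
    have hA1OK : ArcOK j A1 :=
      arcOK_mono hOK (filter_subset _ _) (fun p hp => (mem_filter.1 hp).2)
    have hA2OK : ArcOK (n + 1) A2 :=
      arcOK_mono hOK (filter_subset _ _) (fun p hp => (hOK.1 p (mem_filter.1 hp).1).2)
    obtain ⟨B, hBe⟩ := exists_shift_preimage hA1low (fun p hp => (hA1OK.1 p hp).1)
    obtain ⟨C, hCe⟩ := exists_shift_preimage (fun p hp => (mem_filter.1 hp).2)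
      (fun p hp => (hA2OK.1 p hp).1)
    have hBmem : B ∈ arcN (j - 1) := by
      rw [mem_arcN]
      have hrw : j - 1 + 1 = j := by omega
      apply (arcOK_shift (n := j - 1) (k := 1)).1
      rw [hrw, ← hBe]
      exact hA1OK
    have hCmem : C ∈ arcN (n + 1 - j) := by
      rw [mem_arcN]
      have hrw : n + 1 - j + j = n + 1 := by omega
      apply (arcOK_shift (n := n + 1 - j) (k := j)).1
      rw [hrw, ← hCe]
      exact hA2OK
    refine ⟨(B, C), Finset.mem_product.2 ⟨hBmem, hCmem⟩, ?_⟩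
    ext p
    rw [mem_recomb, ← hBe, ← hCe]
    constructor
    · rintro (rfl | h | h)
      · exact h0j
      · exact (mem_filter.1 h).1
      · exact (mem_filter.1 h).1
    · intro hp
      rcases tri p hp with rfl | h | h
      · exact Or.inl rfl
      · exact Or.inr (Or.inl (mem_filter.2 ⟨hp, h.2.2⟩))
      · exact Or.inr (Or.inr (mem_filter.2 ⟨hp, h⟩))

lemma arcN_succ_card (n : ℕ) :
    (arcN (n + 1)).card =
      (arcN n).card + ∑ j ∈ Finset.Icc 1 n, (arcN (j - 1)).card * (arcN (n + 1 - j)).card := by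
  have cover : arcN (n + 1) = part0 n ∪ (Finset.Icc 1 n).biUnion (partj n) := by
    ext A
    constructor
    · intro hA
      by_cases h : ∃ b, (0, b) ∈ A
      · obtain ⟨b, hb⟩ := h
        have hOK := mem_arcN.1 hA
        have hb2 := hOK.1 _ hb
        simp only at hb2
        rw [Finset.mem_union]
        right
        rw [Finset.mem_biUnion]
        exact ⟨b, Finset.mem_Icc.2 (by omega), mem_filter.2 ⟨hA, hb⟩⟩
      · push_neg at h
        exact Finset.mem_union_left _ (mem_filter.2 ⟨hA, h⟩)
    · intro hA
      rcases Finset.mem_union.1 hA with h | h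
      · exact (mem_filter.1 h).1
      · obtain ⟨b, _, hb⟩ := Finset.mem_biUnion.1 h
        exact (mem_filter.1 hb).1
  have d1 : Disjoint (part0 n) ((Finset.Icc 1 n).biUnion (partj n)) := by
    rw [Finset.disjoint_left]
    intro A h1 h2
    obtain ⟨b, _, hb⟩ := Finset.mem_biUnion.1 h2
    exact (mem_filter.1 h1).2 b (mem_filter.1 hb).2
  have d2 : ∀ j ∈ Finset.Icc 1 n, ∀ j' ∈ Finset.Icc 1 n, j ≠ j' →
      Disjoint (partj n j) (partj n j') := by
    intro j _ j' _ hne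
    rw [Finset.disjoint_left]
    intro A h1 h2
    have hOK := mem_arcN.1 (mem_filter.1 h1).1
    have := hOK.2.1 (0, j) (mem_filter.1 h1).2 (0, j') (mem_filter.1 h2).2 rfl
    simp only [Prod.mk.injEq] at this
    exact hne this.2
  rw [cover, Finset.card_union_of_disjoint d1, Finset.card_biUnion d2, part0_card]
  congr 1
  exact Finset.sum_congr rfl fun j hj =>
    partj_card (Finset.mem_Icc.1 hj).1 (Finset.mem_Icc.1 hj).2

theorem arcN_card_eq_catalan (n : ℕ) : (arcN n).card = catalan n := by
  induction n using Nat.strong_induction_on with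
  | _ n ih =>
    match n with
    | 0 => simpa using arcN_zero_card
    | m + 1 =>
      rw [arcN_succ_card, catalan_succ]
      rw [Fin.sum_univ_eq_sum_range (fun i => catalan i * catalan (m - i))]
      have hs : ∑ j ∈ Finset.Icc 1 m, (arcN (j - 1)).card * (arcN (m + 1 - j)).card =
          ∑ i ∈ Finset.range m, catalan i * catalan (m - i) := by
        apply Finset.sum_nbij' (fun j => j - 1) (fun i => i + 1)
        · intro j hj
          rw [Finset.mem_Icc] at hj
          rw [Finset.mem_range]
          omega
        · intro i hi
          rw [Finset.mem_range] at hi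
          rw [Finset.mem_Icc]
          omega
        · intro j hj
          rw [Finset.mem_Icc] at hj
          omega
        · intro i _
          omega
        · intro j hj
          rw [Finset.mem_Icc] at hj
          rw [ih (j - 1) (by omega), ih (m + 1 - j) (by omega)]
          congr 2
          omega
      rw [hs, ih m (by omega)]
      rw [Finset.sum_range_succ]
      simp [Nat.sub_self]
      ring

def outP (A : Finset (ℕ × ℕ)) (a : ℕ) : Prop := ∃ b, (a, b) ∈ A
def inP (A : Finset (ℕ × ℕ)) (b : ℕ) : Prop := ∃ a, (a, b) ∈ A

noncomputable def stepFun (A : Finset (ℕ × ℕ)) (i : ℕ) : ℤ :=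
  (if outP A i then 1 else 0) - (if inP A i then 1 else 0)

noncomputable def bothSet (n : ℕ) (A : Finset (ℕ × ℕ)) : Finset ℕ :=
  (Finset.range n).filter fun i => outP A i ∧ inP A i

noncomputable def posFlats (n : ℕ) (s : ℕ → ℤ) : Finset ℕ :=
  (Finset.range n).filter fun i => s i = 0 ∧ 0 < ∑ j ∈ Finset.range i, s j

/-- arcs of `A` spanning over position `x`. -/
noncomputable def openArcs (A : Finset (ℕ × ℕ)) (x : ℕ) : Finset (ℕ × ℕ) :=
  A.filter fun p => p.1 < x ∧ x ≤ p.2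

lemma card_outs {n : ℕ} {A : Finset (ℕ × ℕ)} (hA : ArcOK n A) (y : ℕ) :
    ((Finset.range y).filter (outP A)).card = (A.filter fun p => p.1 < y).card := by
  symm
  apply Finset.card_bij (fun p _ => p.1)
  · intro p hp
    rw [mem_filter] at hp ⊢
    obtain ⟨p1, p2⟩ := p
    exact ⟨Finset.mem_range.2 hp.2, ⟨p2, hp.1⟩⟩
  · intro p hp q hq h
    exact hA.2.1 p (mem_filter.1 hp).1 q (mem_filter.1 hq).1 h
  · intro a ha
    rw [mem_filter] at ha
    obtain ⟨b, hb⟩ := ha.2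
    exact ⟨(a, b), mem_filter.2 ⟨hb, Finset.mem_range.1 ha.1⟩, rfl⟩

lemma card_ins {n : ℕ} {A : Finset (ℕ × ℕ)} (hA : ArcOK n A) (y : ℕ) :
    ((Finset.range y).filter (inP A)).card = (A.filter fun p => p.2 < y).card := by
  symm
  apply Finset.card_bij (fun p _ => p.2)
  · intro p hp
    rw [mem_filter] at hp ⊢
    obtain ⟨p1, p2⟩ := p
    exact ⟨Finset.mem_range.2 hp.2, ⟨p1, hp.1⟩⟩
  · intro p hp q hq h
    exact hA.2.2.1 p (mem_filter.1 hp).1 q (mem_filter.1 hq).1 h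
  · intro b hb
    rw [mem_filter] at hb
    obtain ⟨a, ha⟩ := hb.2
    exact ⟨(a, b), mem_filter.2 ⟨ha, Finset.mem_range.1 hb.1⟩, rfl⟩

lemma height_eq {n : ℕ} {A : Finset (ℕ × ℕ)} (hA : ArcOK n A) (x : ℕ) :
    ∑ j ∈ Finset.range x, stepFun A j = ((openArcs A x).card : ℤ) := by
  have hsplit : A.filter (fun p => p.1 < x) =
      A.filter (fun p => p.2 < x) ∪ openArcs A x := by
    ext p
    rw [openArcs, Finset.mem_union, mem_filter, mem_filter, mem_filter]
    constructor
    · rintro ⟨hp, h1⟩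
      by_cases h : p.2 < x
      · exact Or.inl ⟨hp, h⟩
      · exact Or.inr ⟨hp, h1, by omega⟩
    · rintro (⟨hp, h⟩ | ⟨hp, h1, h2⟩)
      · exact ⟨hp, lt_trans (hA.1 p hp).1 h⟩
      · exact ⟨hp, h1⟩
  have hdisj : Disjoint (A.filter (fun p => p.2 < x)) (openArcs A x) := by
    rw [Finset.disjoint_left]
    intro p h1 h2
    rw [mem_filter] at h1
    rw [openArcs, mem_filter] at h2
    omega
  have hcard : (A.filter fun p => p.1 < x).card =
      (A.filter fun p => p.2 < x).card + (openArcs A x).card := by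
    rw [hsplit, Finset.card_union_of_disjoint hdisj]
  have e1 : ∑ j ∈ Finset.range x, stepFun A j =
      (((Finset.range x).filter (outP A)).card : ℤ) -
      (((Finset.range x).filter (inP A)).card : ℤ) := by
    unfold stepFun
    rw [Finset.sum_sub_distrib, Finset.sum_boole, Finset.sum_boole]
  rw [e1, card_outs hA, card_ins hA, hcard]
  push_cast
  ring

lemma stepFun_isMotzkin {n : ℕ} {A : Finset (ℕ × ℕ)} (hA : ArcOK n A) :
    IsMotzkin n (stepFun A) := by
  have hout_lt : ∀ i, outP A i → i < n := by
    rintro i ⟨b, hb⟩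
    have := hA.1 _ hb
    simp only at this
    omega
  have hin_lt : ∀ i, inP A i → i < n := by
    rintro i ⟨a, ha⟩
    exact (hA.1 _ ha).2
  refine ⟨?_, ?_, ?_, ?_⟩
  · intro i _
    unfold stepFun
    by_cases h1 : outP A i <;> by_cases h2 : inP A i <;> simp [h1, h2]
  · intro i hi
    unfold stepFun
    rw [if_neg (fun h => by have := hout_lt i h; omega),
      if_neg (fun h => by have := hin_lt i h; omega)]
    ring
  · intro i _
    rw [height_eq hA]
    positivity
  · rw [height_eq hA]
    have : openArcs A n = ∅ := by
      ext p
      rw [openArcs, mem_filter]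
      simp only [Finset.notMem_empty, iff_false]
      rintro ⟨hp, _, h2⟩
      exact absurd (hA.1 p hp).2 (by omega)
    rw [this]
    simp

/-- the numeric matching condition characterising arcs. -/
def matchCond (n : ℕ) (fo fi : ℕ → Prop) (H : ℕ → ℤ) (a b : ℕ) : Prop :=
  a < b ∧ b < n ∧ fo a ∧ fi b ∧ H (a + 1) = H b ∧
    ∀ y, a < y → y < b → ¬(fi y ∧ H y = H b)

lemma arc_char {n : ℕ} {A : Finset (ℕ × ℕ)} (hA : ArcOK n A) {a b : ℕ} :
    (a, b) ∈ A ↔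
      matchCond n (outP A) (inP A) (fun x => ∑ j ∈ Finset.range x, stepFun A j) a b := by
  have fwd : ∀ a b, (a, b) ∈ A →
      matchCond n (outP A) (inP A) (fun x => ∑ j ∈ Finset.range x, stepFun A j) a b := by
    intro a b hab
    have hb := hA.1 _ hab
    simp only at hb
    have hopen : openArcs A (a + 1) = openArcs A b := by
      ext p
      rw [openArcs, openArcs, mem_filter, mem_filter]
      constructor
      · rintro ⟨hp, h1, h2⟩
        refine ⟨hp, by omega, ?_⟩
        by_contra hcon
        push_neg at hcon
        rcases lt_trichotomy p.1 a with h | h | h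
        · exact hA.2.2.2 p hp (a, b) hab h (by omega) (by omega)
        · have : p = (a, b) := hA.2.1 p hp (a, b) hab (by simpa using h)
          rw [this] at hcon
          simp at hcon
        · omega
      · rintro ⟨hp, h1, h2⟩
        refine ⟨hp, ?_, by omega⟩
        by_contra hcon
        push_neg at hcon
        have hp1a : a < p.1 := by omega
        rcases lt_trichotomy p.2 b with h | h | h
        · omega
        · have : p = (a, b) := hA.2.2.1 p hp (a, b) hab (by simpa using h)
          rw [this] at hp1a
          simp at hp1a
        · exact hA.2.2.2 (a, b) hab p hp hp1a (by omega) h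
    refine ⟨hb.1, hb.2, ⟨b, hab⟩, ⟨a, hab⟩, ?_, ?_⟩
    · show (∑ j ∈ Finset.range (a + 1), stepFun A j) = ∑ j ∈ Finset.range b, stepFun A j
      rw [height_eq hA, height_eq hA, hopen]
    rintro y hy1 hy2 ⟨⟨u, hu⟩, hH'⟩
    have hH : (∑ j ∈ Finset.range y, stepFun A j) = ∑ j ∈ Finset.range b, stepFun A j := hH'
    rw [height_eq hA, height_eq hA] at hH
    have hss : openArcs A b ⊂ openArcs A y := by
      constructor
      · intro p hp
        have hp1 := hp
        rw [← hopen] at hp1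
        rw [openArcs, mem_filter] at hp hp1 ⊢
        exact ⟨hp.1, by omega, by omega⟩
      · intro hsub
        have h1 : (u, y) ∈ openArcs A y := by
          rw [openArcs, mem_filter]
          have := hA.1 _ hu
          simp only at this
          exact ⟨hu, this.1, le_refl y⟩
        have h2 : (u, y) ∉ openArcs A b := by
          rw [openArcs, mem_filter]
          rintro ⟨-, -, h⟩
          simp only at h
          omega
        exact h2 (hsub h1)
    have := Finset.card_lt_card hss
    omega
  constructor
  · exact fwd a b
  · rintro ⟨hab, hbn, ⟨b₀, hb₀⟩, hin, hH', hmin⟩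
    have h₀ := fwd a b₀ hb₀
    have hHb : (∑ j ∈ Finset.range (a + 1), stepFun A j) = ∑ j ∈ Finset.range b, stepFun A j := hH'
    have hHb₀ : (∑ j ∈ Finset.range (a + 1), stepFun A j) = ∑ j ∈ Finset.range b₀, stepFun A j :=
      h₀.2.2.2.2.1
    rcases lt_trichotomy b b₀ with h | h | h
    · exfalso
      have he : (∑ j ∈ Finset.range b, stepFun A j) = ∑ j ∈ Finset.range b₀, stepFun A j := by
        rw [← hHb, hHb₀]
      exact h₀.2.2.2.2.2 b hab h ⟨hin, he⟩
    · rwa [h]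
    · exfalso
      have he : (∑ j ∈ Finset.range b₀, stepFun A j) = ∑ j ∈ Finset.range b, stepFun A j := by
        rw [← hHb₀, hHb]
      exact hmin b₀ h₀.1 h ⟨h₀.2.2.2.1, he⟩

noncomputable def Hs (s : ℕ → ℤ) (x : ℕ) : ℤ := ∑ j ∈ Finset.range x, s j

lemma Hs_succ (s : ℕ → ℤ) (x : ℕ) : Hs s (x + 1) = Hs s x + s x :=
  Finset.sum_range_succ s x

lemma exists_descent {s : ℕ → ℤ} {u v : ℕ} {c : ℤ} (huv : u ≤ v)
    (hstep : ∀ i, u ≤ i → i < v → -1 ≤ s i) (h1 : c ≤ Hs s u) (h2 : Hs s v < c) :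
    ∃ y, u ≤ y ∧ y < v ∧ Hs s y = c ∧ Hs s (y + 1) = c - 1 := by
  have hne : ((Finset.Icc u v).filter (fun x => c ≤ Hs s x)).Nonempty :=
    ⟨u, mem_filter.2 ⟨Finset.mem_Icc.2 ⟨le_refl u, huv⟩, h1⟩⟩
  obtain ⟨y, hymem, hymax⟩ : ∃ y ∈ (Finset.Icc u v).filter (fun x => c ≤ Hs s x),
      ∀ z ∈ (Finset.Icc u v).filter (fun x => c ≤ Hs s x), z ≤ y :=
    ⟨_, Finset.max'_mem _ hne, fun z hz => Finset.le_max' _ z hz⟩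
  rw [mem_filter, Finset.mem_Icc] at hymem
  have hyv : y ≠ v := by
    intro h
    rw [h] at hymem
    omega
  have hy1' : ¬ c ≤ Hs s (y + 1) := by
    intro h
    have := hymax (y + 1) (mem_filter.2 ⟨Finset.mem_Icc.2 ⟨by omega, by omega⟩, h⟩)
    omega
  have hstep' := hstep y hymem.1.1 (by omega)
  have hsucc := Hs_succ s y
  exact ⟨y, hymem.1.1, by omega, by omega, by omega⟩

lemma exists_ascent {s : ℕ → ℤ} {u v : ℕ} {c : ℤ} (huv : u ≤ v)
    (hstep : ∀ i, u ≤ i → i < v → s i ≤ 1) (h1 : Hs s u < c) (h2 : c ≤ Hs s v) :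
    ∃ y, u ≤ y ∧ y < v ∧ Hs s y = c - 1 ∧ Hs s (y + 1) = c := by
  have hne : ((Finset.Icc u v).filter (fun x => Hs s x ≤ c - 1)).Nonempty :=
    ⟨u, mem_filter.2 ⟨Finset.mem_Icc.2 ⟨le_refl u, huv⟩, by omega⟩⟩
  obtain ⟨y, hymem, hymax⟩ : ∃ y ∈ (Finset.Icc u v).filter (fun x => Hs s x ≤ c - 1),
      ∀ z ∈ (Finset.Icc u v).filter (fun x => Hs s x ≤ c - 1), z ≤ y :=
    ⟨_, Finset.max'_mem _ hne, fun z hz => Finset.le_max' _ z hz⟩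
  rw [mem_filter, Finset.mem_Icc] at hymem
  have hyv : y ≠ v := by
    intro h
    rw [h] at hymem
    omega
  have hy1' : ¬ Hs s (y + 1) ≤ c - 1 := by
    intro h
    have := hymax (y + 1) (mem_filter.2 ⟨Finset.mem_Icc.2 ⟨by omega, by omega⟩, h⟩)
    omega
  have hstep' := hstep y hymem.1.1 (by omega)
  have hsucc := Hs_succ s y
  exact ⟨y, hymem.1.1, by omega, by omega, by omega⟩

def outF (n : ℕ) (s : ℕ → ℤ) (T : Finset ℕ) (i : ℕ) : Prop :=
  i < n ∧ (s i = 1 ∨ i ∈ T)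

def inF (n : ℕ) (s : ℕ → ℤ) (T : Finset ℕ) (i : ℕ) : Prop :=
  i < n ∧ (s i = -1 ∨ i ∈ T)

noncomputable def matchSet (n : ℕ) (s : ℕ → ℤ) (T : Finset ℕ) : Finset (ℕ × ℕ) :=
  (Finset.range n ×ˢ Finset.range n).filter fun p =>
    matchCond n (outF n s T) (inF n s T) (Hs s) p.1 p.2

lemma mem_matchSet {n : ℕ} {s : ℕ → ℤ} {T : Finset ℕ} {a b : ℕ} :
    (a, b) ∈ matchSet n s T ↔ matchCond n (outF n s T) (inF n s T) (Hs s) a b := by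
  rw [matchSet, mem_filter]
  constructor
  · exact fun h => h.2
  · intro h
    refine ⟨?_, h⟩
    rw [Finset.mem_product]
    exact ⟨Finset.mem_range.2 h.2.2.1.1, Finset.mem_range.2 h.2.1⟩

section Construction

variable {n : ℕ} {s : ℕ → ℤ} {T : Finset ℕ}

lemma mem_posFlats {i : ℕ} : i ∈ posFlats n s ↔ i < n ∧ s i = 0 ∧ 0 < Hs s i := by
  rw [posFlats, mem_filter, Finset.mem_range, Hs]

lemma step_bounds (hM : IsMotzkin n s) : ∀ i, i < n → -1 ≤ s i ∧ s i ≤ 1 := by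
  intro i hi
  rcases hM.1 i hi with h | h | h <;> omega

lemma Hs_nonneg (hM : IsMotzkin n s) : ∀ i, i ≤ n → 0 ≤ Hs s i := fun i hi => hM.2.2.1 i hi

lemma Hs_n (hM : IsMotzkin n s) : Hs s n = 0 := hM.2.2.2

lemma out_pos (hM : IsMotzkin n s) (hT : T ⊆ posFlats n s) {a : ℕ} (h : outF n s T a) :
    1 ≤ Hs s (a + 1) := by
  obtain ⟨han, hcase⟩ := h
  have h0 := Hs_nonneg hM a (by omega)
  have hsucc := Hs_succ s a
  rcases hcase with h | h
  · omega
  · have := mem_posFlats.1 (hT h)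
    omega

lemma in_pos (hM : IsMotzkin n s) (hT : T ⊆ posFlats n s) {b : ℕ} (h : inF n s T b) :
    1 ≤ Hs s b := by
  obtain ⟨hbn, hcase⟩ := h
  have h0 := Hs_nonneg hM (b + 1) (by omega)
  have hsucc := Hs_succ s b
  rcases hcase with h | h
  · omega
  · have := mem_posFlats.1 (hT h)
    omega

lemma exists_match_out (hM : IsMotzkin n s) (hT : T ⊆ posFlats n s) {a : ℕ}
    (h : outF n s T a) : ∃ b, (a, b) ∈ matchSet n s T := by
  set c := Hs s (a + 1) with hc
  have hc1 : 1 ≤ c := out_pos hM hT h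
  have han : a < n := h.1
  obtain ⟨y, hy1, hy2, hy3, hy4⟩ := exists_descent (u := a + 1) (v := n) (by omega)
    (fun i h1 h2 => (step_bounds hM i h2).1) (le_refl c) (by rw [Hs_n hM]; omega)
  have hys : s y = -1 := by
    have := Hs_succ s y
    omega
  have hne : ((Finset.Ioo a n).filter (fun z => inF n s T z ∧ Hs s z = c)).Nonempty :=
    ⟨y, mem_filter.2 ⟨Finset.mem_Ioo.2 ⟨by omega, hy2⟩, ⟨hy2, Or.inl hys⟩, hy3⟩⟩
  obtain ⟨b, hbmem, hbmin⟩ : ∃ b ∈ (Finset.Ioo a n).filter (fun z => inF n s T z ∧ Hs s z = c),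
      ∀ z ∈ (Finset.Ioo a n).filter (fun z => inF n s T z ∧ Hs s z = c), b ≤ z :=
    ⟨_, Finset.min'_mem _ hne, fun z hz => Finset.min'_le _ z hz⟩
  rw [mem_filter, Finset.mem_Ioo] at hbmem
  refine ⟨b, mem_matchSet.2 ⟨hbmem.1.1, hbmem.1.2, h, hbmem.2.1, by rw [← hc, hbmem.2.2], ?_⟩⟩
  intro z hz1 hz2 ⟨hzin, hzH⟩
  have hzmem : z ∈ (Finset.Ioo a n).filter (fun z => inF n s T z ∧ Hs s z = c) :=
    mem_filter.2 ⟨Finset.mem_Ioo.2 ⟨hz1, by omega⟩, hzin, by rw [hzH, hbmem.2.2]⟩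
  have := hbmin z hzmem
  omega

lemma exists_match_in (hM : IsMotzkin n s) (hT : T ⊆ posFlats n s) {b : ℕ}
    (h : inF n s T b) : ∃ a, (a, b) ∈ matchSet n s T := by
  set c := Hs s b with hc
  have hc1 : 1 ≤ c := in_pos hM hT h
  have hbn : b < n := h.1
  have hH0 : Hs s 0 = 0 := by simp [Hs]
  obtain ⟨y, hy1, hy2, hy3, hy4⟩ := exists_ascent (u := 0) (v := b) (by omega)
    (fun i h1 h2 => (step_bounds hM i (by omega)).2) (by omega) (le_refl c)
  have hys : s y = 1 := by
    have := Hs_succ s y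
    omega
  have hne : ((Finset.range b).filter (fun x => outF n s T x ∧ Hs s (x + 1) = c)).Nonempty :=
    ⟨y, mem_filter.2 ⟨Finset.mem_range.2 hy2, ⟨by omega, Or.inl hys⟩, hy4⟩⟩
  obtain ⟨a, haS, hamax⟩ : ∃ a ∈ (Finset.range b).filter
        (fun x => outF n s T x ∧ Hs s (x + 1) = c),
      ∀ z ∈ (Finset.range b).filter (fun x => outF n s T x ∧ Hs s (x + 1) = c), z ≤ a :=
    ⟨_, Finset.max'_mem _ hne, fun z hz => Finset.le_max' _ z hz⟩
  rw [mem_filter, Finset.mem_range] at haS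
  refine ⟨a, mem_matchSet.2 ⟨haS.1, hbn, haS.2.1, h, by rw [haS.2.2], ?_⟩⟩
  intro z hz1 hz2 ⟨hzin, hzH⟩
  rcases hzin.2 with hcase | hcase
  · have hz1H : Hs s (z + 1) = c - 1 := by
      have := Hs_succ s z
      omega
    obtain ⟨x, hx1, hx2, hx3, hx4⟩ := exists_ascent (u := z + 1) (v := b) (c := c) (by omega)
      (fun i h1 h2 => (step_bounds hM i (by omega)).2) (by omega) (by omega)
    have hxs : s x = 1 := by
      have := Hs_succ s x
      omega
    have hxm : x ∈ (Finset.range b).filter (fun x => outF n s T x ∧ Hs s (x + 1) = c) :=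
      mem_filter.2 ⟨Finset.mem_range.2 hx2, ⟨by omega, Or.inl hxs⟩, hx4⟩
    have := hamax x hxm
    omega
  · have hz0 : s z = 0 := (mem_posFlats.1 (hT hcase)).2.1
    have hzm : z ∈ (Finset.range b).filter (fun x => outF n s T x ∧ Hs s (x + 1) = c) :=
      mem_filter.2 ⟨Finset.mem_range.2 hz2,
        ⟨hzin.1, Or.inr hcase⟩, by have := Hs_succ s z; omega⟩
    have := hamax z hzm
    omega

lemma matchSet_above (hM : IsMotzkin n s) (hT : T ⊆ posFlats n s) {a b : ℕ}
    (hab : (a, b) ∈ matchSet n s T) : ∀ y, a < y → y ≤ b → Hs s b ≤ Hs s y := by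
  obtain ⟨h1, h2, h3, h4, h5, h6⟩ := mem_matchSet.1 hab
  intro y hy1 hy2
  by_contra hcon
  push_neg at hcon
  obtain ⟨z, hz1, hz2, hz3, hz4⟩ := exists_descent (u := a + 1) (v := y) (by omega)
    (fun i hi1 hi2 => (step_bounds hM i (by omega)).1) (by omega) hcon
  have hzs : s z = -1 := by
    have := Hs_succ s z
    omega
  exact h6 z (by omega) (by omega) ⟨⟨by omega, Or.inl hzs⟩, by omega⟩

lemma matchSet_arcOK (hM : IsMotzkin n s) (hT : T ⊆ posFlats n s) :
    ArcOK n (matchSet n s T) := by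
  refine ⟨?_, ?_, ?_, ?_⟩
  · rintro ⟨a, b⟩ hp
    have h := mem_matchSet.1 hp
    exact ⟨h.1, h.2.1⟩
  · rintro ⟨a, b⟩ hp ⟨a', b'⟩ hq he
    simp only at he
    subst he
    have h := mem_matchSet.1 hp
    have h' := mem_matchSet.1 hq
    rcases lt_trichotomy b b' with hlt | hlt | hlt
    · exact absurd (h'.2.2.2.2.2 b h.1 hlt ⟨h.2.2.2.1, by rw [← h.2.2.2.2.1, h'.2.2.2.2.1]⟩)
        not_false
    · rw [hlt]
    · exact absurd (h.2.2.2.2.2 b' h'.1 hlt ⟨h'.2.2.2.1, by rw [← h.2.2.2.2.1, h'.2.2.2.2.1]⟩)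
        not_false
  · rintro ⟨a, b⟩ hp ⟨a', b'⟩ hq he
    simp only at he
    subst he
    have wlog_key : ∀ a a' : ℕ, a < a' → (a, b) ∈ matchSet n s T →
        (a', b) ∈ matchSet n s T → False := by
      intro a a' hlt hab ha'b
      have h := mem_matchSet.1 hab
      have h' := mem_matchSet.1 ha'b
      have hf1 : a < b := h.1
      have hf2 : b < n := h.2.1
      have hf3 : a' < b := h'.1
      rcases h'.2.2.1.2 with hcase | hcase
      · have hHa' : Hs s a' = Hs s b - 1 := by
          have := Hs_succ s a'
          have := h'.2.2.2.2.1
          omega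
        obtain ⟨z, hz1, hz2, hz3, hz4⟩ := exists_descent (u := a + 1) (v := a')
          (by omega) (fun i hi1 hi2 => (step_bounds hM i (by omega)).1)
          (by rw [h.2.2.2.2.1]) (by omega)
        have hzs : s z = -1 := by
          have := Hs_succ s z
          omega
        exact h.2.2.2.2.2 z (by omega) (by omega)
          ⟨⟨by omega, Or.inl hzs⟩, by omega⟩
      · have hs0 : s a' = 0 := (mem_posFlats.1 (hT hcase)).2.1
        have hHa' : Hs s a' = Hs s b := by
          have := Hs_succ s a'
          have := h'.2.2.2.2.1
          omega
        exact h.2.2.2.2.2 a' hlt h'.1 ⟨⟨h'.2.2.1.1, Or.inr hcase⟩, hHa'⟩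
    rcases lt_trichotomy a a' with hlt | hlt | hlt
    · exact absurd (wlog_key a a' hlt hp hq) not_false
    · rw [hlt]
    · exact absurd (wlog_key a' a hlt hq hp) not_false
  · rintro ⟨a, b⟩ hp ⟨a', b'⟩ hq ha hb hc
    simp only at ha hb hc
    have h := mem_matchSet.1 hp
    have h' := mem_matchSet.1 hq
    have k1 : Hs s b ≤ Hs s (a' + 1) := matchSet_above hM hT hp (a' + 1) (by omega) (by omega)
    have k2 : Hs s b' ≤ Hs s b := matchSet_above hM hT hq b hb (by omega)
    have k3 : Hs s b = Hs s b' := by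
      have := h'.2.2.2.2.1
      omega
    exact h'.2.2.2.2.2 b hb hc ⟨h.2.2.2.1, k3⟩

lemma stepFun_matchSet (hM : IsMotzkin n s) (hT : T ⊆ posFlats n s) :
    stepFun (matchSet n s T) = s := by
  have hout : ∀ a, outP (matchSet n s T) a ↔ outF n s T a := by
    intro a
    constructor
    · rintro ⟨b, hb⟩
      exact (mem_matchSet.1 hb).2.2.1
    · exact fun h => exists_match_out hM hT h
  have hin : ∀ b, inP (matchSet n s T) b ↔ inF n s T b := by
    intro b
    constructor
    · rintro ⟨a, ha⟩
      exact (mem_matchSet.1 ha).2.2.2.1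
    · exact fun h => exists_match_in hM hT h
  funext i
  unfold stepFun
  by_cases hi : i < n
  · rcases hM.1 i hi with hcase | hcase | hcase
    · have hiT : i ∉ T := fun h => by have := (mem_posFlats.1 (hT h)).2.1; omega
      rw [if_pos ((hout i).2 ⟨hi, Or.inl hcase⟩),
        if_neg (fun h => by rcases ((hin i).1 h).2 with h' | h'; omega; exact hiT h')]
      omega
    · by_cases hiT : i ∈ T
      · rw [if_pos ((hout i).2 ⟨hi, Or.inr hiT⟩), if_pos ((hin i).2 ⟨hi, Or.inr hiT⟩)]
        omega
      · rw [if_neg (fun h => by rcases ((hout i).1 h).2 with h' | h'; omega; exact hiT h'),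
          if_neg (fun h => by rcases ((hin i).1 h).2 with h' | h'; omega; exact hiT h')]
        omega
    · have hiT : i ∉ T := fun h => by have := (mem_posFlats.1 (hT h)).2.1; omega
      rw [if_neg (fun h => by rcases ((hout i).1 h).2 with h' | h'; omega; exact hiT h'),
        if_pos ((hin i).2 ⟨hi, Or.inl hcase⟩)]
      omega
  · rw [if_neg (fun h => hi ((hout i).1 h).1), if_neg (fun h => hi ((hin i).1 h).1),
      hM.2.1 i (by omega)]
    ring

lemma bothSet_matchSet (hM : IsMotzkin n s) (hT : T ⊆ posFlats n s) :
    bothSet n (matchSet n s T) = T := by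
  ext i
  rw [bothSet, mem_filter, Finset.mem_range]
  constructor
  · rintro ⟨hi, ⟨b, hb⟩, ⟨a, ha⟩⟩
    have h1 := (mem_matchSet.1 hb).2.2.1
    have h2 := (mem_matchSet.1 ha).2.2.2.1
    by_contra hiT
    rcases h1.2 with hc1 | hc1
    · rcases h2.2 with hc2 | hc2
      · omega
      · exact hiT hc2
    · exact hiT hc1
  · intro hiT
    have hi := (mem_posFlats.1 (hT hiT)).1
    refine ⟨hi, ?_, ?_⟩
    · exact exists_match_out hM hT ⟨hi, Or.inr hiT⟩
    · exact exists_match_in hM hT ⟨hi, Or.inr hiT⟩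

end Construction

lemma outP_iff {n : ℕ} {A : Finset (ℕ × ℕ)} {s : ℕ → ℤ} (hOK : ArcOK n A)
    (hstep : stepFun A = s) (a : ℕ) : outP A a ↔ outF n s (bothSet n A) a := by
  constructor
  · rintro hout
    obtain ⟨b, hb⟩ := hout
    have hbnd := hOK.1 _ hb
    simp only at hbnd
    have han : a < n := by omega
    by_cases hin : inP A a
    · exact ⟨han, Or.inr (mem_filter.2 ⟨Finset.mem_range.2 han, ⟨b, hb⟩, hin⟩)⟩
    · refine ⟨han, Or.inl ?_⟩
      rw [← hstep]
      unfold stepFun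
      rw [if_pos ⟨b, hb⟩, if_neg hin]
      ring
  · rintro ⟨han, hcase | hcase⟩
    · by_contra hcon
      rw [← hstep] at hcase
      unfold stepFun at hcase
      rw [if_neg hcon] at hcase
      by_cases hin : inP A a
      · rw [if_pos hin] at hcase; omega
      · rw [if_neg hin] at hcase; omega
    · exact (mem_filter.1 hcase).2.1

lemma inP_iff {n : ℕ} {A : Finset (ℕ × ℕ)} {s : ℕ → ℤ} (hOK : ArcOK n A)
    (hstep : stepFun A = s) (b : ℕ) : inP A b ↔ inF n s (bothSet n A) b := by
  constructor
  · rintro hin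
    obtain ⟨a, ha⟩ := hin
    have hbnd := hOK.1 _ ha
    simp only at hbnd
    have hbn : b < n := hbnd.2
    by_cases hout : outP A b
    · exact ⟨hbn, Or.inr (mem_filter.2 ⟨Finset.mem_range.2 hbn, hout, ⟨a, ha⟩⟩)⟩
    · refine ⟨hbn, Or.inl ?_⟩
      rw [← hstep]
      unfold stepFun
      rw [if_neg hout, if_pos ⟨a, ha⟩]
      ring
  · rintro ⟨hbn, hcase | hcase⟩
    · by_contra hcon
      rw [← hstep] at hcase
      unfold stepFun at hcase
      rw [if_neg hcon] at hcase
      by_cases hout : outP A b <;> [rw [if_pos hout] at hcase; rw [if_neg hout] at hcase] <;>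
        omega
    · exact (mem_filter.1 hcase).2.2

lemma matchCond_congr {n : ℕ} {fo fi fo' fi' : ℕ → Prop} {H H' : ℕ → ℤ}
    (ho : ∀ x, fo x ↔ fo' x) (hi : ∀ x, fi x ↔ fi' x) (hH : ∀ x, H x = H' x) {a b : ℕ} :
    matchCond n fo fi H a b ↔ matchCond n fo' fi' H' a b := by
  unfold matchCond
  constructor
  · rintro ⟨h1, h2, h3, h4, h5, h6⟩
    refine ⟨h1, h2, (ho a).1 h3, (hi b).1 h4, by rw [← hH, ← hH, h5], ?_⟩
    intro y hy1 hy2 ⟨hy3, hy4⟩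
    exact h6 y hy1 hy2 ⟨(hi y).2 hy3, by rw [hH, hH, hy4]⟩
  · rintro ⟨h1, h2, h3, h4, h5, h6⟩
    refine ⟨h1, h2, (ho a).2 h3, (hi b).2 h4, by rw [hH, hH, h5], ?_⟩
    intro y hy1 hy2 ⟨hy3, hy4⟩
    exact h6 y hy1 hy2 ⟨(hi y).1 hy3, by rw [← hH, ← hH, hy4]⟩

lemma fiber_card {n : ℕ} {s : ℕ → ℤ} (hM : IsMotzkin n s) :
    ((arcN n).filter (fun A => stepFun A = s)).card = 2 ^ (posFlats n s).card := by
  rw [← Finset.card_powerset]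
  apply Finset.card_bij (fun A _ => bothSet n A)
  · intro A hA
    rw [Finset.mem_powerset]
    rw [mem_filter] at hA
    have hOK := mem_arcN.1 hA.1
    intro i hi
    rw [bothSet, mem_filter, Finset.mem_range] at hi
    obtain ⟨hin, hout1, hin1⟩ := hi
    rw [mem_posFlats]
    refine ⟨hin, ?_, ?_⟩
    · rw [← hA.2]
      unfold stepFun
      rw [if_pos hout1, if_pos hin1]
      ring
    · have he : Hs s i = ((openArcs A i).card : ℤ) := by
        rw [← hA.2]
        exact height_eq hOK i
      obtain ⟨u, hu⟩ := hin1
      have hmem : (u, i) ∈ openArcs A i := by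
        rw [openArcs, mem_filter]
        have := hOK.1 _ hu
        simp only at this ⊢
        exact ⟨hu, this.1, le_refl i⟩
      have : 0 < (openArcs A i).card := Finset.card_pos.2 ⟨_, hmem⟩
      omega
  · intro A hA A' hA' hbs
    rw [mem_filter] at hA hA'
    have hOK := mem_arcN.1 hA.1
    have hOK' := mem_arcN.1 hA'.1
    have ho : ∀ x, outP A x ↔ outP A' x := by
      intro x
      rw [outP_iff hOK hA.2, outP_iff hOK' hA'.2, hbs]
    have hi : ∀ x, inP A x ↔ inP A' x := by
      intro x
      rw [inP_iff hOK hA.2, inP_iff hOK' hA'.2, hbs]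
    have hH : ∀ x, (∑ j ∈ Finset.range x, stepFun A j) = ∑ j ∈ Finset.range x, stepFun A' j := by
      intro x
      rw [hA.2, hA'.2]
    ext p
    obtain ⟨a, b⟩ := p
    rw [arc_char hOK, arc_char hOK']
    exact matchCond_congr ho hi hH
  · intro T hT
    rw [Finset.mem_powerset] at hT
    exact ⟨matchSet n s T, mem_filter.2 ⟨mem_arcN.2 (matchSet_arcOK hM hT),
      stepFun_matchSet hM hT⟩, bothSet_matchSet hM hT⟩

lemma motzkin_set_eq (n : ℕ) :
    {s : ℕ → ℤ | IsMotzkin n s} = ↑((arcN n).image stepFun) := by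
  ext s
  simp only [Set.mem_setOf_eq, Finset.coe_image, Set.mem_image, Finset.mem_coe]
  constructor
  · intro hM
    exact ⟨matchSet n s ∅, mem_arcN.2 (matchSet_arcOK hM (Finset.empty_subset _)),
      stepFun_matchSet hM (Finset.empty_subset _)⟩
  · rintro ⟨A, hA, rfl⟩
    exact stepFun_isMotzkin (mem_arcN.1 hA)

theorem motzkin_sum (n : ℕ) :
    (∑ᶠ s ∈ {s : ℕ → ℤ | IsMotzkin n s},
      2 ^ (Set.ncard {i : ℕ | i < n ∧ s i = 0 ∧ 0 < ∑ j ∈ Finset.range i, s j})) =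
    (arcN n).card := by
  rw [motzkin_set_eq, finsum_mem_coe_finset]
  have hncard : ∀ s : ℕ → ℤ,
      Set.ncard {i : ℕ | i < n ∧ s i = 0 ∧ 0 < ∑ j ∈ Finset.range i, s j}
        = (posFlats n s).card := by
    intro s
    rw [← Set.ncard_coe_finset]
    congr 1
    ext i
    simp only [Finset.coe_filter, posFlats, Set.mem_setOf_eq, Finset.mem_range,
      Finset.mem_coe, mem_filter]
  calc ∑ s ∈ (arcN n).image stepFun,
        2 ^ (Set.ncard {i : ℕ | i < n ∧ s i = 0 ∧ 0 < ∑ j ∈ Finset.range i, s j})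
      = ∑ s ∈ (arcN n).image stepFun, 2 ^ (posFlats n s).card := by
        exact Finset.sum_congr rfl fun s _ => by rw [hncard]
    _ = ∑ s ∈ (arcN n).image stepFun, ((arcN n).filter (fun A => stepFun A = s)).card := by
        refine Finset.sum_congr rfl fun s hs => ?_
        obtain ⟨A, hA, rfl⟩ := Finset.mem_image.1 hs
        rw [fiber_card (stepFun_isMotzkin (mem_arcN.1 hA))]
    _ = (arcN n).card := by
        rw [← Finset.card_eq_sum_card_fiberwise
          (fun A hA => Finset.mem_image_of_mem stepFun hA)]

noncomputable def repF (A : Finset (ℕ × ℕ)) (hA : ∀ p ∈ A, p.1 < p.2) (j : ℕ) : ℕ :=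
  if h : ∃ a, (a, j) ∈ A then repF A hA (Classical.choose h) else j
termination_by j
decreasing_by exact hA _ (Classical.choose_spec h)

section RepMachinery

variable {n : ℕ} {A : Finset (ℕ × ℕ)} (hOK : ArcOK n A)

/-- ancestor relation along arcs. -/
def anc (A : Finset (ℕ × ℕ)) : ℕ → ℕ → Prop :=
  Relation.ReflTransGen fun u v => (u, v) ∈ A

lemma anc_le (h2 : ∀ p ∈ A, p.1 < p.2) {x y : ℕ} (h : anc A x y) : x ≤ y := by
  induction h with
  | refl => exact le_refl x
  | tail hanc harc ih => exact le_trans ih (le_of_lt (h2 _ harc))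

include hOK

lemma rep_arc {a j : ℕ} (h : (a, j) ∈ A) :
    repF A (fun p hp => (hOK.1 p hp).1) j = repF A (fun p hp => (hOK.1 p hp).1) a := by
  rw [repF]
  have hex : ∃ x, (x, j) ∈ A := ⟨a, h⟩
  rw [dif_pos hex]
  have : Classical.choose hex = a := by
    have hc := Classical.choose_spec hex
    have := hOK.2.2.1 _ hc _ h rfl
    simpa using this
  rw [this]

lemma rep_le (j : ℕ) : repF A (fun p hp => (hOK.1 p hp).1) j ≤ j := by
  induction j using Nat.strong_induction_on with
  | _ j ih =>
    rw [repF]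
    split_ifs with h
    · have hlt : Classical.choose h < j := (hOK.1 _ (Classical.choose_spec h)).1
      exact le_trans (ih _ hlt) (le_of_lt hlt)
    · exact le_refl j

lemma anc_rep (j : ℕ) : anc A (repF A (fun p hp => (hOK.1 p hp).1) j) j := by
  induction j using Nat.strong_induction_on with
  | _ j ih =>
    rw [repF]
    split_ifs with h
    · have hlt : Classical.choose h < j := (hOK.1 _ (Classical.choose_spec h)).1
      exact Relation.ReflTransGen.tail (ih _ hlt) (Classical.choose_spec h)
    · exact Relation.ReflTransGen.refl

lemma rep_fix {j : ℕ} (h : ¬ ∃ a, (a, j) ∈ A) :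
    repF A (fun p hp => (hOK.1 p hp).1) j = j := by
  rw [repF, dif_neg h]

lemma comparable_of_lt : ∀ y x : ℕ, x < y →
    repF A (fun p hp => (hOK.1 p hp).1) x = repF A (fun p hp => (hOK.1 p hp).1) y →
    anc A x y ∨ anc A y x := by
  intro y
  induction y using Nat.strong_induction_on with
  | _ y ih =>
    intro x hxy hrep
    by_cases h : ∃ a, (a, y) ∈ A
    · obtain ⟨p, hp⟩ := h
      have hrp : repF A (fun p hp => (hOK.1 p hp).1) y
          = repF A (fun p hp => (hOK.1 p hp).1) p := rep_arc hOK hp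
      have hpy : p < y := (hOK.1 _ hp).1
      rcases lt_trichotomy p x with hpx | hpx | hpx
      · -- p < x : derive contradiction
        rcases ih x hxy p hpx (by omega) with hc | hc
        · -- anc p x, p ≠ x
          rcases Relation.ReflTransGen.cases_head hc with rfl | ⟨c, hc1, hc2⟩
          · omega
          · have hcy : c = y := by
              have := hOK.2.1 _ hc1 _ hp rfl
              simpa using this
            subst hcy
            have := anc_le (fun p hp => (hOK.1 p hp).1) hc2
            omega
        · have := anc_le (fun p hp => (hOK.1 p hp).1) hc
          omega
      · subst hpx
        exact Or.inl (Relation.ReflTransGen.single hp)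
      · -- x < p
        rcases ih p hpy x hpx (by omega) with hc | hc
        · exact Or.inl (Relation.ReflTransGen.tail hc hp)
        · -- hc : anc A p x with x < p
          rcases Relation.ReflTransGen.cases_head hc with rfl | ⟨c, hc1, hc2⟩
          · omega
          · have hcy : c = y := by
              have := hOK.2.1 _ hc1 _ hp rfl
              simpa using this
            subst hcy
            exact Or.inr hc2
    · -- no prev: rep y = y, but rep x ≤ x < y
      have h1 : repF A (fun p hp => (hOK.1 p hp).1) y = y := rep_fix hOK h
      have h2 : repF A (fun p hp => (hOK.1 p hp).1) x ≤ x := rep_le hOK x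
      omega

end RepMachinery

section SetoidCorr

variable {n : ℕ}

noncomputable def toArc (n : ℕ) (s : Setoid (Fin n)) : Finset (ℕ × ℕ) :=
  (Finset.range n ×ˢ Finset.range n).filter fun p =>
    ∃ (h1 : p.1 < n) (h2 : p.2 < n), precedes s ⟨p.1, h1⟩ ⟨p.2, h2⟩

noncomputable def toSetoid (n : ℕ) (A : Finset (ℕ × ℕ)) : Setoid (Fin n) :=
  Relation.EqvGen.setoid fun i j => ((i : ℕ), (j : ℕ)) ∈ A

lemma toSetoid_r {A : Finset (ℕ × ℕ)} {i j : Fin n} :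
    (toSetoid n A).r i j ↔
      Relation.EqvGen (fun i j : Fin n => ((i : ℕ), (j : ℕ)) ∈ A) i j :=
  Iff.rfl

lemma mem_toArc {s : Setoid (Fin n)} {i j : Fin n} :
    ((i : ℕ), (j : ℕ)) ∈ toArc n s ↔ precedes s i j := by
  rw [toArc, mem_filter]
  constructor
  · rintro ⟨-, h1, h2, h⟩
    have e1 : (⟨((i : ℕ), (j : ℕ)).1, h1⟩ : Fin n) = i := Fin.ext rfl
    have e2 : (⟨((i : ℕ), (j : ℕ)).2, h2⟩ : Fin n) = j := Fin.ext rfl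
    rwa [e1, e2] at h
  · intro h
    refine ⟨Finset.mem_product.2 ⟨Finset.mem_range.2 i.2, Finset.mem_range.2 j.2⟩,
      i.2, j.2, ?_⟩
    have e1 : (⟨((i : ℕ), (j : ℕ)).1, i.2⟩ : Fin n) = i := Fin.ext rfl
    have e2 : (⟨((i : ℕ), (j : ℕ)).2, j.2⟩ : Fin n) = j := Fin.ext rfl
    rw [e1, e2]
    exact h

lemma precedes_right_unique {s : Setoid (Fin n)} {i j j' : Fin n}
    (h : precedes s i j) (h' : precedes s i j') : j = j' := by
  rcases lt_trichotomy j j' with hlt | he | hlt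
  · exact absurd h.2.1 (h'.2.2 j h.1 hlt)
  · exact he
  · exact absurd h'.2.1 (h.2.2 j' h'.1 hlt)

lemma precedes_left_unique {s : Setoid (Fin n)} {i i' j : Fin n}
    (h : precedes s i j) (h' : precedes s i' j) : i = i' := by
  rcases lt_trichotomy i i' with hlt | he | hlt
  · exact absurd (s.iseqv.trans h.2.1 (s.iseqv.symm h'.2.1)) (h.2.2 i' hlt h'.1)
  · exact he
  · exact absurd (s.iseqv.trans h'.2.1 (s.iseqv.symm h.2.1)) (h'.2.2 i hlt h.1)

lemma toArc_arcOK {s : Setoid (Fin n)} (hs : NonCrossing s) : ArcOK n (toArc n s) := by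
  have memc : ∀ p ∈ toArc n s,
      ∃ (h1 : p.1 < n) (h2 : p.2 < n), precedes s ⟨p.1, h1⟩ ⟨p.2, h2⟩ :=
    fun p hp => (mem_filter.1 hp).2
  refine ⟨?_, ?_, ?_, ?_⟩
  · intro p hp
    obtain ⟨h1, h2, h⟩ := memc p hp
    exact ⟨h.1, h2⟩
  · intro p hp q hq he
    obtain ⟨h1, h2, h⟩ := memc p hp
    obtain ⟨g1, g2, g⟩ := memc q hq
    have e1 : (⟨q.1, g1⟩ : Fin n) = ⟨p.1, h1⟩ := Fin.ext he.symm
    rw [e1] at g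
    have e2 := precedes_right_unique h g
    have hval : p.2 = q.2 := congrArg Fin.val e2
    exact Prod.ext he hval
  · intro p hp q hq he
    obtain ⟨h1, h2, h⟩ := memc p hp
    obtain ⟨g1, g2, g⟩ := memc q hq
    have e1 : (⟨q.2, g2⟩ : Fin n) = ⟨p.2, h2⟩ := Fin.ext he.symm
    rw [e1] at g
    have e2 := precedes_left_unique h g
    have hval : p.1 = q.1 := congrArg Fin.val e2
    exact Prod.ext hval he
  · intro p hp q hq ha hb hc
    obtain ⟨h1, h2, h⟩ := memc p hp
    obtain ⟨g1, g2, g⟩ := memc q hq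
    exact hs ⟨⟨p.1, h1⟩, ⟨p.2, h2⟩, ⟨q.1, g1⟩, ⟨q.2, g2⟩, h, g, ha, hb, hc⟩

variable {A : Finset (ℕ × ℕ)}

lemma toSetoid_r_iff (hOK : ArcOK n A) {i j : Fin n} :
    (toSetoid n A).r i j ↔
      repF A (fun p hp => (hOK.1 p hp).1) ↑i = repF A (fun p hp => (hOK.1 p hp).1) ↑j := by
  constructor
  · intro h
    induction h with
    | rel x y hxy => exact (rep_arc hOK hxy).symm
    | refl x => rfl
    | symm x y _ ih => exact ih.symm
    | trans x y z _ _ ih1 ih2 => exact ih1.trans ih2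
  · intro h
    have lift : ∀ x y : ℕ, anc A x y → ∀ (hx : x < n) (hy : y < n),
        Relation.EqvGen (fun i j : Fin n => ((i : ℕ), (j : ℕ)) ∈ A) ⟨x, hx⟩ ⟨y, hy⟩ := by
      intro x y hanc
      induction hanc with
      | refl => intro hx hy; exact Relation.EqvGen.refl _
      | @tail b c hb harc ih =>
        intro hx hy
        have hbn : b < n := by
          have := hOK.1 _ harc
          simp only at this
          omega
        exact Relation.EqvGen.trans _ _ _ (ih hx hbn) (Relation.EqvGen.rel _ _ harc)
    rcases lt_trichotomy (↑i : ℕ) ↑j with hlt | he | hlt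
    · rcases comparable_of_lt hOK ↑j ↑i hlt h with hc | hc
      · have := lift _ _ hc i.2 j.2
        exact toSetoid_r.2 (by simpa using this)
      · have := anc_le (fun p hp => (hOK.1 p hp).1) hc
        omega
    · have : i = j := Fin.ext he
      rw [this]
    · rcases comparable_of_lt hOK ↑i ↑j hlt h.symm with hc | hc
      · have := lift _ _ hc j.2 i.2
        exact Relation.EqvGen.symm _ _ (by simpa using this)
      · have := anc_le (fun p hp => (hOK.1 p hp).1) hc
        omega

lemma arc_precedes (hOK : ArcOK n A) {a b : ℕ} (hab : (a, b) ∈ A) (ha : a < n)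
    (hb : b < n) : precedes (toSetoid n A) ⟨a, ha⟩ ⟨b, hb⟩ := by
  have hlt : a < b := (hOK.1 _ hab).1
  refine ⟨hlt, Relation.EqvGen.rel _ _ hab, ?_⟩
  intro k hk1 hk2 hr
  have hrep := (toSetoid_r_iff hOK).1 hr
  have hak : a < (↑k : ℕ) := hk1
  have hkb : (↑k : ℕ) < b := hk2
  rcases comparable_of_lt hOK ↑k a hak hrep with hc | hc
  · rcases Relation.ReflTransGen.cases_head hc with he | ⟨c, hc1, hc2⟩
    · omega
    · have hcb : c = b := by
        have := hOK.2.1 _ hc1 _ hab rfl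
        simpa using this
      subst hcb
      have := anc_le (fun p hp => (hOK.1 p hp).1) hc2
      omega
  · have := anc_le (fun p hp => (hOK.1 p hp).1) hc
    omega

lemma precedes_arc (hOK : ArcOK n A) {i j : Fin n}
    (h : precedes (toSetoid n A) i j) : ((i : ℕ), (j : ℕ)) ∈ A := by
  have hlt : (↑i : ℕ) < ↑j := h.1
  have hrep := (toSetoid_r_iff hOK).1 h.2.1
  rcases comparable_of_lt hOK ↑j ↑i hlt hrep with hc | hc
  · rcases Relation.ReflTransGen.cases_head hc with he | ⟨c, hc1, hc2⟩
    · omega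
    · have hcj : c ≤ ↑j := anc_le (fun p hp => (hOK.1 p hp).1) hc2
      rcases eq_or_lt_of_le hcj with rfl | hclt
      · exact hc1
      · have hcn : c < n := lt_trans hclt j.2
        have hic : (↑i : ℕ) < c := (hOK.1 _ hc1).1
        have hrk : (toSetoid n A).r i ⟨c, hcn⟩ := Relation.EqvGen.rel _ _ hc1
        exact absurd hrk (h.2.2 ⟨c, hcn⟩ hic hclt)
  · have := anc_le (fun p hp => (hOK.1 p hp).1) hc
    omega

lemma toSetoid_noncrossing (hOK : ArcOK n A) : NonCrossing (toSetoid n A) := by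
  rintro ⟨a, b, c, d, hab, hcd, h1, h2, h3⟩
  exact hOK.2.2.2 _ (precedes_arc hOK hab) _ (precedes_arc hOK hcd) h1 h2 h3

lemma toArc_toSetoid (hOK : ArcOK n A) : toArc n (toSetoid n A) = A := by
  ext p
  obtain ⟨a, b⟩ := p
  constructor
  · intro hp
    obtain ⟨h1, h2, h⟩ := (mem_filter.1 hp).2
    exact precedes_arc hOK h
  · intro hp
    have hb := hOK.1 _ hp
    simp only at hb
    have h1 : a < n := by omega
    exact mem_toArc (i := ⟨a, h1⟩) (j := ⟨b, hb.2⟩) |>.2 (arc_precedes hOK hp h1 hb.2)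

lemma toSetoid_toArc {s : Setoid (Fin n)} (hs : NonCrossing s) :
    toSetoid n (toArc n s) = s := by
  apply Setoid.ext
  intro i j
  constructor
  · intro h
    induction h with
    | rel x y hxy => exact (mem_toArc.1 hxy).2.1
    | refl x => exact s.iseqv.refl x
    | symm _ _ _ ih => exact s.iseqv.symm ih
    | trans _ _ _ _ _ ih1 ih2 => exact s.iseqv.trans ih1 ih2
  · intro h
    have aux : ∀ d : ℕ, ∀ i j : Fin n, s.r i j → i < j → ((↑j : ℕ) - ↑i) ≤ d →
        Relation.EqvGen (fun i j : Fin n => ((i : ℕ), (j : ℕ)) ∈ toArc n s) i j := by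
      intro d
      induction d with
      | zero =>
        intro i j _ hlt hle
        have hv : (↑i : ℕ) < ↑j := hlt
        omega
      | succ d ih =>
        intro i j hr hlt hle
        have hne : (Finset.univ.filter fun k : Fin n => i < k ∧ s.r i k).Nonempty :=
          ⟨j, mem_filter.2 ⟨Finset.mem_univ j, hlt, hr⟩⟩
        obtain ⟨k, hkmem, hkmin⟩ :
            ∃ k ∈ Finset.univ.filter fun k : Fin n => i < k ∧ s.r i k,
              ∀ z ∈ Finset.univ.filter fun k : Fin n => i < k ∧ s.r i k, k ≤ z :=
          ⟨_, Finset.min'_mem _ hne, fun z hz => Finset.min'_le _ z hz⟩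
        rw [mem_filter] at hkmem
        have hprec : precedes s i k := by
          refine ⟨hkmem.2.1, hkmem.2.2, ?_⟩
          intro m hm1 hm2 hrm
          have := hkmin m (mem_filter.2 ⟨Finset.mem_univ m, hm1, hrm⟩)
          exact absurd hm2 (not_lt.2 this)
        have hbase : Relation.EqvGen
            (fun i j : Fin n => ((i : ℕ), (j : ℕ)) ∈ toArc n s) i k :=
          Relation.EqvGen.rel _ _ (mem_toArc.2 hprec)
        have hkj : k ≤ j := hkmin j (mem_filter.2 ⟨Finset.mem_univ j, hlt, hr⟩)
        rcases eq_or_lt_of_le hkj with rfl | hkj'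
        · exact hbase
        · have hrkj : s.r k j := s.iseqv.trans (s.iseqv.symm hkmem.2.2) hr
          have hd : ((↑j : ℕ) - ↑k) ≤ d := by
            have h1 : (↑i : ℕ) < ↑k := hkmem.2.1
            have h2 : (↑k : ℕ) < ↑j := hkj'
            omega
          exact Relation.EqvGen.trans _ _ _ hbase (ih k j hrkj hkj' hd)
    rcases lt_trichotomy i j with hlt | he | hlt
    · exact aux _ i j h hlt (le_refl _)
    · rw [he]
    · exact Relation.EqvGen.symm _ _ (aux _ j i (s.iseqv.symm h) hlt (le_refl _))

end SetoidCorr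

noncomputable def ncEquiv (n : ℕ) :
    {s : Setoid (Fin n) // NonCrossing s} ≃ {A : Finset (ℕ × ℕ) // A ∈ arcN n} where
  toFun s := ⟨toArc n s.1, mem_arcN.2 (toArc_arcOK s.2)⟩
  invFun A := ⟨toSetoid n A.1, toSetoid_noncrossing (mem_arcN.1 A.2)⟩
  left_inv s := Subtype.ext (toSetoid_toArc s.2)
  right_inv A := Subtype.ext (toArc_toSetoid (mem_arcN.1 A.2))

lemma ncard_noncrossing (n : ℕ) :
    Set.ncard {s : Setoid (Fin n) | NonCrossing s} = (arcN n).card := by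
  rw [← Nat.card_coe_set_eq]
  have e : Nat.card {s : Setoid (Fin n) // NonCrossing s}
      = Nat.card {A : Finset (ℕ × ℕ) // A ∈ arcN n} := Nat.card_congr (ncEquiv n)
  rw [show (Nat.card ↥{s : Setoid (Fin n) | NonCrossing s})
      = Nat.card {s : Setoid (Fin n) // NonCrossing s} from rfl, e,
    Nat.card_eq_fintype_card, Fintype.card_coe]

/-- The number of non-crossing set partitions of `{1,…,n}` is the `n`-th Catalan
number, and equals the sum over Motzkin paths `m` of length `n` of `2^{h(m)}`,
where `h(m)` is the number of horizontal steps of `m` at strictly positive height. -/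
theorem noncrossing_count (n : ℕ) :
    Set.ncard {s : Setoid (Fin n) | NonCrossing s} = catalan n ∧
    Set.ncard {s : Setoid (Fin n) | NonCrossing s} =
      ∑ᶠ s ∈ {s : ℕ → ℤ | IsMotzkin n s},
        2 ^ (Set.ncard {i : ℕ | i < n ∧ s i = 0 ∧ 0 < ∑ j ∈ Finset.range i, s j}) := by
  constructor
  · rw [ncard_noncrossing, arcN_card_eq_catalan]
  · rw [ncard_noncrossing]
    exact (motzkin_sum n).symm
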